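/- Let $S$ be an operator that is bounded from $L^1(\mathbb{R}^n)$ to $L^{1,\infty}(\mathbb{R}^n)$ with constant $1$, and for $\lambda \in (0,1)$ define $S_\lambda^\star f(x) = \sup_{Q \ni x} (S(f\chi_Q))^*(\lambda|Q|)$, where the supremum is over all cubes $Q$ containing $x$ and $h^*$ denotes the non-increasing rearrangement. Then $S_\lambda^\star$ is bounded from $L^1(\mathbb{R}^n)$ to $L^{1,\infty}(\mathbb{R}^n)$ with constant $C_n \lambda^{-1}$, i.e. $|\{x : S_\lambda^\star f(x) > \alpha\}| \leq C_n (\lambda\alpha)^{-1} \|f\|_{L^1(\mathbb{R}^n)}$ for all $\alpha > 0$. -/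

import Mathlib

/-!
If `α < S_λ^⋆ f(x)`, some cube `Q ∋ x` has `(S(fχ_Q))^*(λ|Q|) > α`. Were `∫_Q |f| ≤ λα|Q|`,
the weak type bound for `S` at height `α` would give `|{|S(fχ_Q)| > α}| ≤ λ|Q|`, i.e.
`(S(fχ_Q))^*(λ|Q|) ≤ α`. Hence `{S_λ^⋆ f > α} ⊆ {M f > λα}` for the maximal operator `M`
over cubes, and the Vitali covering lemma (cubes are sup-norm balls, enlarged by the
factor `4`) gives `|{M f > λα}| ≤ 4ⁿ (λα)⁻¹ ‖f‖₁`.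
-/

open MeasureTheory

noncomputable section

/-- The (closed) cube in `ℝⁿ` with center `c` and side length `l`. -/
def cube {n : ℕ} (c : Fin n → ℝ) (l : ℝ) : Set (Fin n → ℝ) :=
  {x | ∀ i, |x i - c i| ≤ l / 2}

/-- The average `(1/|Q|) ∫_Q f` of a function over a set. -/
def avgI {n : ℕ} (Q : Set (Fin n → ℝ)) (f : (Fin n → ℝ) → ℝ) : ℝ :=
  (volume Q).toReal⁻¹ * ∫ x in Q, f x

/-- `C` is an `A_1` bound for the weight `w`: for every cube `Q`,
`(1/|Q|)∫_Q w ≤ C · essinf_Q w`. -/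
def A1Bound {n : ℕ} (w : (Fin n → ℝ) → ℝ) (C : ℝ) : Prop :=
  ∀ (c : Fin n → ℝ) (l : ℝ), 0 < l →
    avgI (cube c l) w ≤ C * essInf w (volume.restrict (cube c l))

/-- `C` is an `A_s` bound for the weight `w`, `s ∈ (1,∞)`: for every cube `Q`,
`⟨w⟩_Q · ⟨w^{1-s'}⟩_Q^{s-1} ≤ C` where `s' = s/(s-1)`. -/
def ApBound {n : ℕ} (w : (Fin n → ℝ) → ℝ) (s : ℝ) (C : ℝ) : Prop :=
  ∀ (c : Fin n → ℝ) (l : ℝ), 0 < l →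
    avgI (cube c l) w *
      (avgI (cube c l) (fun x => w x ^ (1 - s / (s - 1)))) ^ (s - 1) ≤ C

/-- The non-increasing rearrangement `h^*(t) = inf{s > 0 : |{|h| > s}| ≤ t}`. -/
def rearr {α : Type*} [MeasurableSpace α] (μ : Measure α) (h : α → ℝ) (t : ℝ) : ℝ :=
  sInf {s : ℝ | 0 < s ∧ μ {x | s < |h x|} ≤ ENNReal.ofReal t}

/-- `S_λ^⋆ f(x) = sup_{Q ∋ x} (S(fχ_Q))^*(λ|Q|)`, supremum over cubes containing `x`. -/
def Sstar {n : ℕ} (S : ((Fin n → ℝ) → ℝ) → ((Fin n → ℝ) → ℝ)) (lam : ℝ)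
    (f : (Fin n → ℝ) → ℝ) (x : Fin n → ℝ) : ℝ :=
  sSup {v : ℝ | ∃ (c : Fin n → ℝ) (l : ℝ), 0 < l ∧ x ∈ cube c l ∧
    v = rearr volume (S ((cube c l).indicator f)) (lam * (volume (cube c l)).toReal)}

open Metric Set
open scoped ENNReal

theorem mul_measure_iUnion_closedBall_le {α ι : Type*} [PseudoMetricSpace α]
    [MeasurableSpace α] [OpensMeasurableSpace α] (μ ν : Measure α) [SFinite ν] (c : ι → α)
    (r : ι → ℝ) {R : ℝ} (hR : ∀ i, r i ≤ R) {τ : ℝ} (hτ : 3 < τ) {K t : ℝ≥0∞}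
    (hμ : ∀ i, μ (closedBall (c i) (τ * r i)) ≤ K * μ (closedBall (c i) (r i)))
    (hν : ∀ i, t * μ (closedBall (c i) (r i)) < ν (closedBall (c i) (r i))) :
    t * μ (⋃ i, closedBall (c i) (r i)) ≤ K * ν univ := by
  obtain ⟨u, -, hdisj, hcover⟩ :=
    Vitali.exists_disjoint_subfamily_covering_enlargement_closedBall univ c r R
      (fun i _ => hR i) τ hτ
  have hu : u.Countable := by
    have h := Measure.countable_meas_pos_of_disjoint_iUnion (μ := ν)
      (As := fun i : u => closedBall (c i) (r i)) (fun _ => measurableSet_closedBall)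
      fun i j hij => hdisj i.2 j.2 (Subtype.coe_ne_coe.2 hij)
    rw [eq_univ_of_forall (s := {i : u | 0 < ν _}) fun i => pos_of_gt (hν i),
      countable_univ_iff] at h
    exact countable_coe_iff.1 h
  calc t * μ (⋃ i, closedBall (c i) (r i))
      ≤ t * μ (⋃ i ∈ u, closedBall (c i) (τ * r i)) := by
        gcongr t * μ ?_
        refine iUnion_subset fun i => ?_
        obtain ⟨j, hj, hij⟩ := hcover i (mem_univ i)
        exact hij.trans (subset_biUnion_of_mem (u := fun i => closedBall (c i) (τ * r i)) hj)
    _ ≤ t * ∑' i : u, μ (closedBall (c i) (τ * r i)) := by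
        gcongr; exact measure_biUnion_le μ hu _
    _ ≤ t * ∑' i : u, K * μ (closedBall (c i) (r i)) := by gcongr with i; exact hμ i
    _ = K * ∑' i : u, t * μ (closedBall (c i) (r i)) := by
        rw [ENNReal.tsum_mul_left, ENNReal.tsum_mul_left, mul_left_comm]
    _ ≤ K * ∑' i : u, ν (closedBall (c i) (r i)) := by gcongr with i; exact (hν i).le
    _ = K * ν (⋃ i ∈ u, closedBall (c i) (r i)) := by
        rw [measure_biUnion hu hdisj fun _ _ => measurableSet_closedBall]
    _ ≤ K * ν univ := by gcongr; exact subset_univ _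

section Cube

variable {n : ℕ}

theorem measurableSet_cube (c : Fin n → ℝ) (l : ℝ) : MeasurableSet (cube c l) := by
  simp only [cube, ofPred_forall]
  exact MeasurableSet.iInter fun i => measurableSet_le (by fun_prop) measurable_const

theorem cube_eq_closedBall (c : Fin n → ℝ) {l : ℝ} (hl : 0 ≤ l) :
    cube c l = closedBall c (l / 2) := by
  ext x
  simp only [cube, mem_ofPred_eq, mem_closedBall, dist_pi_le_iff (by linarith : 0 ≤ l / 2),
    Real.dist_eq]

theorem volume_cube (c : Fin n → ℝ) {l : ℝ} (hl : 0 ≤ l) :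
    volume (cube c l) = ENNReal.ofReal (l ^ n) := by
  rw [cube_eq_closedBall c hl, Real.volume_pi_closedBall c (by linarith), Fintype.card_fin]
  ring_nf

-- In dimension `0` every cube is the whole one-point space: its volume does not bound its side.
theorem exists_cube_eq_of_side_le (c : Fin n → ℝ) {l : ℝ} (hl : 0 < l) :
    ∃ l' ∈ Ioc 0 (max 1 (volume (cube c l)).toReal), cube c l' = cube c l := by
  rw [volume_cube c hl.le, ENNReal.toReal_ofReal (by positivity)]
  rcases n.eq_zero_or_pos with rfl | hn
  · exact ⟨1, ⟨one_pos, le_max_left _ _⟩, by simp [cube]⟩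
  · refine ⟨l, ⟨hl, ?_⟩, rfl⟩
    rcases le_total l 1 with h | h
    · exact h.trans (le_max_left _ _)
    · exact (le_self_pow₀ h hn.ne').trans (le_max_right _ _)

end Cube

section MaximalFunction

variable {n : ℕ} {f : (Fin n → ℝ) → ℝ}

/-- The maximal operator `M` over cubes, valued in `ℝ≥0∞` so that no boundedness is needed. -/
def cubeMaximalFunction (f : (Fin n → ℝ) → ℝ) (x : Fin n → ℝ) : ℝ≥0∞ :=
  ⨆ (c : Fin n → ℝ) (l : ℝ) (_ : 0 < l) (_ : x ∈ cube c l),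
    ENNReal.ofReal (avgI (cube c l) fun y => |f y|)

theorem ofReal_lt_cubeMaximalFunction_iff {t : ℝ} (ht : 0 ≤ t) {x : Fin n → ℝ} :
    ENNReal.ofReal t < cubeMaximalFunction f x ↔ ∃ (c : Fin n → ℝ) (l : ℝ), 0 < l ∧
      x ∈ cube c l ∧ t * (volume (cube c l)).toReal < ∫ y in cube c l, |f y| := by
  simp only [cubeMaximalFunction, lt_iSup_iff, exists_prop]
  refine exists₂_congr fun c l => and_congr_right fun hl => and_congr_right fun _ => ?_
  have hvol : 0 < (volume (cube c l)).toReal := by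
    rw [volume_cube c hl.le, ENNReal.toReal_ofReal (by positivity)]
    positivity
  rw [ENNReal.ofReal_lt_ofReal_iff', avgI, lt_inv_mul_iff₀ hvol, mul_comm t]
  exact and_iff_left_of_imp fun h => lt_inv_mul_iff₀ hvol |>.2 h |>.trans_le' ht

theorem exists_cube_side_le_of_ofReal_lt_cubeMaximalFunction (hf : Integrable f) {t : ℝ}
    (ht : 0 < t) {x : Fin n → ℝ} (hx : ENNReal.ofReal t < cubeMaximalFunction f x) :
    ∃ (c : Fin n → ℝ) (l : ℝ), 0 < l ∧ l ≤ max 1 ((∫ y, |f y|) / t) ∧ x ∈ cube c l ∧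
      t * (volume (cube c l)).toReal < ∫ y in cube c l, |f y| := by
  obtain ⟨c, l₀, hl₀, hx₀, hlt⟩ := (ofReal_lt_cubeMaximalFunction_iff ht.le).1 hx
  obtain ⟨l, ⟨hl, hle⟩, hcube⟩ := exists_cube_eq_of_side_le c hl₀
  have hvol : (volume (cube c l₀)).toReal ≤ (∫ y, |f y|) / t := by
    rw [le_div_iff₀ ht, mul_comm]
    exact hlt.le.trans (setIntegral_le_integral hf.abs (.of_forall fun _ => abs_nonneg _))
  exact ⟨c, l, hl, hle.trans (max_le_max le_rfl hvol), hcube ▸ hx₀, hcube ▸ hlt⟩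

theorem volume_setOf_ofReal_lt_cubeMaximalFunction_le (hf : Integrable f) {t : ℝ}
    (ht : 0 < t) :
    volume {x | ENNReal.ofReal t < cubeMaximalFunction f x} ≤
      ENNReal.ofReal (4 ^ n / t * ∫ y, |f y|) := by
  set E := {x | ENNReal.ofReal t < cubeMaximalFunction f x}
  choose c l hl hlR hx hlt using fun x : E =>
    exists_cube_side_le_of_ofReal_lt_cubeMaximalFunction hf ht x.2
  set ν := volume.withDensity fun y => ENNReal.ofReal |f y|
  have hν : ∀ s, MeasurableSet s → ν s = ENNReal.ofReal (∫ y in s, |f y|) := fun s hs => by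
    rw [withDensity_apply _ hs, ofReal_integral_eq_lintegral_ofReal hf.abs.integrableOn
      (.of_forall fun _ => abs_nonneg _)]
  have hball : ∀ x : E, cube (c x) (l x) = closedBall (c x) (l x / 2) := fun x =>
    cube_eq_closedBall _ (hl x).le
  have hdouble : ∀ x : E, volume (closedBall (c x) (4 * (l x / 2))) ≤
      ENNReal.ofReal (4 ^ n) * volume (closedBall (c x) (l x / 2)) := fun x => by
    rw [Measure.addHaar_closedBall_mul volume _ (by norm_num) (by linarith [hl x]),
      Measure.addHaar_closedBall_center volume (c x), Module.finrank_fin_fun]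
  have hdense : ∀ x : E, ENNReal.ofReal t * volume (closedBall (c x) (l x / 2)) <
      ν (closedBall (c x) (l x / 2)) := fun x => by
    have hfin : volume (cube (c x) (l x)) ≠ ⊤ := by
      rw [volume_cube _ (hl x).le]; exact ENNReal.ofReal_ne_top
    rw [← hball, hν _ (measurableSet_cube _ _), ← ENNReal.ofReal_toReal hfin,
      ← ENNReal.ofReal_mul ht.le]
    exact (ENNReal.ofReal_lt_ofReal_iff_of_nonneg (by positivity)).2 (hlt x)
  have hcover : E ⊆ ⋃ x : E, closedBall (c x) (l x / 2) := fun x hxE =>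
    mem_iUnion.2 ⟨⟨x, hxE⟩, hball _ ▸ hx ⟨x, hxE⟩⟩
  have key := mul_measure_iUnion_closedBall_le volume ν c (fun x => l x / 2)
    (fun x => (half_le_self (hl x).le).trans (hlR x)) (by norm_num : (3 : ℝ) < 4)
    hdouble hdense
  rw [hν _ MeasurableSet.univ, Measure.restrict_univ,
    ← ENNReal.ofReal_mul (by positivity)] at key
  rw [div_mul_eq_mul_div, ENNReal.ofReal_div_of_pos ht,
    ENNReal.le_div_iff_mul_le (by simp [ht]) (by simp), mul_comm]
  exact le_trans (by gcongr) key

end MaximalFunction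

section WeakType

variable {α : Type*} [MeasurableSpace α] {μ : Measure α}

def WeakTypeOneOne (μ : Measure α) (S : (α → ℝ) → α → ℝ) : Prop :=
  ∀ g : α → ℝ, Integrable g μ → ∀ s : ℝ, 0 < s →
    ENNReal.ofReal s * μ {y | s < |S g y|} ≤ ENNReal.ofReal (∫ y, |g y| ∂μ)

theorem rearr_le {h : α → ℝ} {s t : ℝ} (hs : 0 < s)
    (hst : μ {x | s < |h x|} ≤ ENNReal.ofReal t) : rearr μ h t ≤ s :=
  csInf_le ⟨0, fun _ hv => hv.1.le⟩ ⟨hs, hst⟩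

theorem WeakTypeOneOne.rearr_le {S : (α → ℝ) → α → ℝ} (hS : WeakTypeOneOne μ S) {g : α → ℝ}
    (hg : Integrable g μ) {s t : ℝ} (hs : 0 < s) (hgt : ∫ y, |g y| ∂μ ≤ s * t) :
    rearr μ (S g) t ≤ s := by
  refine _root_.rearr_le hs <|
    (ENNReal.mul_le_mul_iff_right (by simpa using hs) ENNReal.ofReal_ne_top).1 ?_
  calc ENNReal.ofReal s * μ {y | s < |S g y|}
      ≤ ENNReal.ofReal (∫ y, |g y| ∂μ) := hS g hg s hs
    _ ≤ ENNReal.ofReal (s * t) := ENNReal.ofReal_le_ofReal hgt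
    _ = ENNReal.ofReal s * ENNReal.ofReal t := ENNReal.ofReal_mul hs.le

end WeakType

theorem ofReal_lt_cubeMaximalFunction_of_lt_Sstar {n : ℕ}
    {S : ((Fin n → ℝ) → ℝ) → (Fin n → ℝ) → ℝ} (hS : WeakTypeOneOne volume S) {lam : ℝ}
    (hlam : 0 < lam) {f : (Fin n → ℝ) → ℝ} (hf : Integrable f) {α : ℝ} (hα : 0 < α)
    {x : Fin n → ℝ} (hx : α < Sstar S lam f x) :
    ENNReal.ofReal (lam * α) < cubeMaximalFunction f x := by
  unfold Sstar at hx
  obtain ⟨_, ⟨c, l, hl, hxQ, rfl⟩, hαv⟩ :=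
    exists_lt_of_lt_csSup (by exact ⟨_, x, 1, one_pos, by simp [cube], rfl⟩) hx
  rw [ofReal_lt_cubeMaximalFunction_iff (by positivity)]
  refine ⟨c, l, hl, hxQ, lt_of_not_ge fun hle => hαv.not_ge ?_⟩
  refine hS.rearr_le (hf.indicator (measurableSet_cube c l)) hα ?_
  calc ∫ y, |(cube c l).indicator f y| = ∫ y in cube c l, |f y| := by
        rw [← integral_indicator (measurableSet_cube c l)]
        exact congrArg _ (indicator_comp_of_zero abs_zero).symm
    _ ≤ α * (lam * (volume (cube c l)).toReal) := by linarith

/-- If `S` is bounded from `L¹(ℝⁿ)` to `L^{1,∞}(ℝⁿ)` with constant `1`, then `S_λ^⋆`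
is bounded from `L¹` to `L^{1,∞}` with constant `Cₙ λ⁻¹`:
`|{S_λ^⋆ f > α}| ≤ Cₙ (λα)⁻¹ ‖f‖_{L¹}` for all `α > 0`. -/
theorem Sstar_weak_one_one (n : ℕ) :
    ∃ C : ℝ, 0 < C ∧
      ∀ S : ((Fin n → ℝ) → ℝ) → ((Fin n → ℝ) → ℝ),
        (∀ g : (Fin n → ℝ) → ℝ, MeasureTheory.Integrable g → ∀ α : ℝ, 0 < α →
          ENNReal.ofReal α * volume {y | α < |S g y|} ≤
            ENNReal.ofReal (∫ y, |g y|)) →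
        ∀ lam : ℝ, 0 < lam → lam < 1 →
          ∀ f : (Fin n → ℝ) → ℝ, MeasureTheory.Integrable f → ∀ α : ℝ, 0 < α →
            volume {x | α < Sstar S lam f x} ≤
              ENNReal.ofReal (C / (lam * α) * ∫ y, |f y|) := by
  refine ⟨4 ^ n, by positivity, fun S hS lam hlam _ f hf α hα => ?_⟩
  calc volume {x | α < Sstar S lam f x}
      ≤ volume {x | ENNReal.ofReal (lam * α) < cubeMaximalFunction f x} :=
        measure_mono fun _ => ofReal_lt_cubeMaximalFunction_of_lt_Sstar hS hlam hf hα
    _ ≤ ENNReal.ofReal (4 ^ n / (lam * α) * ∫ y, |f y|) :=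
        volume_setOf_ofReal_lt_cubeMaximalFunction_le hf (by positivity)
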